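/- Let A be the 3-dimensional complex 3-Lie algebra with [e1,e2,e3] = e1. If T with matrix (a_{ij}) is an O-operator with respect to the adjoint representation and a12 = a13 = 0 and a11 ≠ 0, then a22 + a33 = 0. -/

import Mathlib

/-!
The first coordinate of `br x y z` is the determinant with rows `x, y, z`, so every bracket is a
multiple of `e₁`. Evaluating the `𝒪`-operator identity at `(e₁, e₂, e₃)` and using `T e₁ = a₁₁ e₁`,
the left side is `det T · e₁ = a₁₁ (a₂₂a₃₃ - a₂₃a₃₂) e₁`, while the right side is
`(a₁₁a₂₂ + (a₂₂a₃₃ - a₂₃a₃₂) + a₃₃a₁₁) · a₁₁ e₁`. Their difference is `a₁₁² (a₂₂ + a₃₃) = 0`.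
-/

open Finset

/-- The standard basis of `ℂ³`: `e 0 = e₁`, `e 1 = e₂`, `e 2 = e₃`. -/
def e (i : Fin 3) : Fin 3 → ℂ := fun j => if j = i then 1 else 0

/-- The trilinear skew-symmetric bracket on `ℂ³` determined by `[e₁,e₂,e₃] = e₁`. -/
def br (x y z : Fin 3 → ℂ) : Fin 3 → ℂ := fun i =>
  if i = 0 then
    x 0 * (y 1 * z 2 - y 2 * z 1) - x 1 * (y 0 * z 2 - y 2 * z 0)
      + x 2 * (y 0 * z 1 - y 1 * z 0)
  else 0

/-- `T` is an `𝒪`-operator with respect to the adjoint representation. -/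
def IsOOperator (T : (Fin 3 → ℂ) →ₗ[ℂ] (Fin 3 → ℂ)) : Prop :=
  ∀ x y z : Fin 3 → ℂ, br (T x) (T y) (T z) =
    T (br (T x) (T y) z + br (T y) (T z) x + br (T z) (T x) y)

lemma br_eq_det_smul (x y z : Fin 3 → ℂ) : br x y z = (Matrix.of ![x, y, z]).det • e 0 := by
  funext i
  by_cases hi : i = 0
  · subst hi
    simp only [br, Matrix.det_fin_three, Matrix.of_apply, Matrix.cons_val, Pi.smul_apply, e,
      ↓reduceIte, smul_eq_mul, mul_one]
    ring
  · simp [br, e, hi]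

lemma IsOOperator.det_smul_eq {T : (Fin 3 → ℂ) →ₗ[ℂ] (Fin 3 → ℂ)} (hO : IsOOperator T)
    (x y z : Fin 3 → ℂ) :
    (Matrix.of ![T x, T y, T z]).det • e 0 =
      ((Matrix.of ![T x, T y, z]).det + (Matrix.of ![T y, T z, x]).det +
        (Matrix.of ![T z, T x, y]).det) • T (e 0) := by
  simpa only [br_eq_det_smul, ← add_smul, map_smul] using hO x y z

lemma apply_e_eq_row {T : (Fin 3 → ℂ) →ₗ[ℂ] (Fin 3 → ℂ)} {a : Fin 3 → Fin 3 → ℂ}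
    (hT : ∀ i, T (e i) = ∑ j, a i j • e j) (i : Fin 3) : T (e i) = ![a i 0, a i 1, a i 2] := by
  funext j
  fin_cases j <;> simp [hT, e]

/-- If `T` is an `𝒪`-operator with `a₁₂ = a₁₃ = 0` and `a₁₁ ≠ 0`, then `a₂₂ + a₃₃ = 0`. -/
theorem case_a12_a13_zero (T : (Fin 3 → ℂ) →ₗ[ℂ] (Fin 3 → ℂ))
    (a : Fin 3 → Fin 3 → ℂ) (hT : ∀ i, T (e i) = ∑ j, a i j • e j)
    (hO : IsOOperator T)
    (h12 : a 0 1 = 0) (h13 : a 0 2 = 0) (h11 : a 0 0 ≠ 0) :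
    a 1 1 + a 2 2 = 0 := by
  have hcoord := congrFun (hO.det_smul_eq (e 0) (e 1) (e 2)) 0
  simp only [apply_e_eq_row hT, h12, h13, Matrix.det_fin_three, Matrix.of_apply, Matrix.cons_val,
    Pi.smul_apply, e, smul_eq_mul, Fin.reduceEq, ↓reduceIte] at hcoord
  have key : a 0 0 ^ 2 * (a 1 1 + a 2 2) = 0 := by linear_combination -hcoord
  simpa [h11] using key
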